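/- Let c>0 and define I₂(d)=∫_d^c log(c/(2√(c²−y²)))·dy/√((c²−y²)(y²−d²)) for 0<d<c. Then I₂(c(1−η)) = −(π/(4c))·log(2η) + O(η·log(1/η)) as η→0⁺; that is, there exist constants C>0 and η₀>0 such that |I₂(c(1−η)) + (π/(4c))·log(2η)| ≤ C·η·log(1/η) for all 0<η<η₀. -/

import Mathlib

/-!
The substitution `y = √(d² + (c² - d²) sin² t)` removes both endpoint singularities:
`I₂(d) = ∫₀^{π/2} (A - log cos t) / y(t) dt` with `A = log (c / (2√(c² - d²)))`.
Since `d ≤ y(t) ≤ c` and `∫₀^{π/2} log cos = -(π/2) log 2`, the integral `I₂(d)` is squeezed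
between `(π/2)(A + log 2)/c` and `(π/2)(A + log 2)/d`. For `d = c(1 - η)` one has
`A + log 2 = -½ log (η(2 - η))` and `1/d - 1/c = O(η)`, which gives the expansion.
-/

/-- `I₂(d) = ∫_d^c log(c/(2√(c²−y²)))·dy/√((c²−y²)(y²−d²))`. -/
noncomputable def I2 (c d : ℝ) : ℝ :=
  ∫ y in d..c, Real.log (c / (2 * Real.sqrt (c^2 - y^2))) /
    Real.sqrt ((c^2 - y^2) * (y^2 - d^2))

open Real Set MeasureTheory intervalIntegral

lemma integral_div_mem_Icc {h ρ : ℝ → ℝ} {a b m M : ℝ} (hab : a ≤ b) (hm : 0 < m)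
    (hh : IntervalIntegrable h volume a b) (hh₀ : ∀ t ∈ Ioo a b, 0 ≤ h t)
    (hρ : ContinuousOn ρ (Icc a b)) (hρm : ∀ t ∈ Icc a b, m ≤ ρ t)
    (hρM : ∀ t ∈ Icc a b, ρ t ≤ M) :
    ∫ t in a..b, h t / ρ t ∈ Icc ((∫ t in a..b, h t) / M) ((∫ t in a..b, h t) / m) := by
  have hρ₀ : ∀ t ∈ Icc a b, 0 < ρ t := fun t ht => hm.trans_le (hρm t ht)
  have hdiv : IntervalIntegrable (fun t => h t / ρ t) volume a b := by
    simp only [div_eq_mul_inv]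
    exact hh.mul_continuousOn (uIcc_of_le hab ▸ hρ.inv₀ fun t ht => (hρ₀ t ht).ne')
  rw [← intervalIntegral.integral_div, ← intervalIntegral.integral_div]
  constructor
  · refine integral_mono_on_of_le_Ioo hab (hh.div_const M) hdiv fun t ht => ?_
    exact div_le_div_of_nonneg_left (hh₀ t ht) (hρ₀ t (Ioo_subset_Icc_self ht))
      (hρM t (Ioo_subset_Icc_self ht))
  · refine integral_mono_on_of_le_Ioo hab hdiv (hh.div_const m) fun t ht => ?_
    exact div_le_div_of_nonneg_left (hh₀ t ht) hm (hρm t (Ioo_subset_Icc_self ht))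

lemma integral_log_cos_zero_pi_div_two : ∫ t in 0..(π / 2), log (cos t) = -log 2 * π / 2 := by
  have h := integral_comp_sub_left (fun t => log (sin t)) (π / 2) (a := 0) (b := π / 2)
  simp only [sin_pi_div_two_sub, sub_self, sub_zero] at h
  rw [h, integral_log_sin_zero_pi_div_two]

lemma log_two_sub_log_two_sub_le {η : ℝ} (hη : 0 ≤ η) (hη₁ : η ≤ 1) :
    log 2 - log (2 - η) ≤ η := by
  have h := log_le_sub_one_of_pos (show 0 < 2 / (2 - η) from div_pos two_pos (by linarith))
  have h' : 2 / (2 - η) - 1 ≤ η := by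
    rw [div_sub_one (by linarith), div_le_iff₀ (by linarith)]; nlinarith
  rw [log_div two_ne_zero (by linarith)] at h
  linarith

lemma log_two_mul_sub_log_mul_two_sub_div_le {η : ℝ} (hη : 0 < η) (hη₀ : η ≤ 1 / 8) :
    log (2 * η) - log (η * (2 - η)) / (1 - η) ≤ 4 * η * log (1 / η) := by
  rw [log_mul two_ne_zero hη.ne', log_mul hη.ne' (by linarith), one_div, log_inv]
  have hL : 1 / 2 ≤ -log η := by
    have := one_sub_inv_le_log_of_pos (inv_pos.2 hη)
    rw [inv_inv, log_inv] at this
    linarith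
  have hℓ : 0 ≤ log (2 - η) := log_nonneg (by linarith)
  have hℓ₂ := log_two_sub_log_two_sub_le hη.le (by linarith)
  have hdiv : -(log η + log (2 - η)) / (1 - η) ≤ -(log η + log (2 - η)) + 2 * η * -log η := by
    rw [div_le_iff₀ (by linarith)]
    nlinarith [mul_nonneg hη.le (show 0 ≤ -log η * (1 - 2 * η) + log (2 - η) by nlinarith)]
  rw [neg_div] at hdiv
  nlinarith

noncomputable def sinSubst (c d t : ℝ) : ℝ := √(d ^ 2 + (c ^ 2 - d ^ 2) * sin t ^ 2)

section sinSubst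

variable {c d : ℝ}

lemma sinSubst_zero (hd : 0 ≤ d) : sinSubst c d 0 = d := by
  simp [sinSubst, sqrt_sq hd]

lemma sinSubst_pi_div_two (hc : 0 ≤ c) : sinSubst c d (π / 2) = c := by
  simp [sinSubst, sqrt_sq hc]

lemma continuous_sinSubst : Continuous (sinSubst c d) := by
  unfold sinSubst; fun_prop

variable (hd : 0 ≤ d) (hdc : d ≤ c)
include hd hdc

lemma sq_sinSubst (t : ℝ) : sinSubst c d t ^ 2 = d ^ 2 + (c ^ 2 - d ^ 2) * sin t ^ 2 := by
  have : d ^ 2 ≤ c ^ 2 := pow_le_pow_left₀ hd hdc 2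
  exact sq_sqrt (by positivity)

lemma le_sinSubst (t : ℝ) : d ≤ sinSubst c d t := by
  have : d ^ 2 ≤ c ^ 2 := pow_le_pow_left₀ hd hdc 2
  refine le_sqrt_of_sq_le ?_
  nlinarith [sq_nonneg (sin t)]

lemma sinSubst_le (t : ℝ) : sinSubst c d t ≤ c := by
  have : d ^ 2 ≤ c ^ 2 := pow_le_pow_left₀ hd hdc 2
  refine sqrt_le_iff.2 ⟨hd.trans hdc, ?_⟩
  nlinarith [sin_sq_le_one t]

end sinSubst

lemma hasDerivAt_sinSubst {c d : ℝ} (hd : 0 < d) (hdc : d ≤ c) (t : ℝ) :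
    HasDerivAt (sinSubst c d) ((c ^ 2 - d ^ 2) * sin t * cos t / sinSubst c d t) t := by
  have hsin : HasDerivAt (fun t => sin t ^ 2) (2 * sin t ^ (2 - 1) * cos t) t :=
    (hasDerivAt_sin t).pow 2
  have hpos : 0 < d ^ 2 + (c ^ 2 - d ^ 2) * sin t ^ 2 := by
    have : d ^ 2 ≤ c ^ 2 := pow_le_pow_left₀ hd.le hdc 2
    have : 0 ≤ (c ^ 2 - d ^ 2) * sin t ^ 2 := mul_nonneg (by linarith) (sq_nonneg _)
    positivity
  refine ((hsin.const_mul (c ^ 2 - d ^ 2)).const_add (d ^ 2)).sqrt hpos.ne' |>.congr_deriv ?_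
  simp only [sinSubst]
  field_simp
  ring

lemma I2_eq_integral_sinSubst {c d : ℝ} (hd : 0 < d) (hdc : d < c) :
    I2 c d = ∫ t in 0..(π / 2),
      (log (c / (2 * √(c ^ 2 - d ^ 2))) - log (cos t)) / sinSubst c d t := by
  have hcd : 0 < c ^ 2 - d ^ 2 := by nlinarith
  have hcov := integral_comp_mul_deriv_of_deriv_nonneg (a := 0) (b := π / 2)
    (g := fun y => log (c / (2 * √(c ^ 2 - y ^ 2))) / √((c ^ 2 - y ^ 2) * (y ^ 2 - d ^ 2)))
    continuous_sinSubst.continuousOn (fun t _ => hasDerivAt_sinSubst hd hdc.le t) fun t ht => by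
      rw [min_eq_left (by positivity), max_eq_right (by positivity)] at ht
      have hs := sin_nonneg_of_nonneg_of_le_pi ht.1.le (by linarith [ht.2, pi_pos])
      have hk := cos_nonneg_of_mem_Icc ⟨by linarith [ht.1, pi_pos], ht.2.le⟩
      exact div_nonneg (by positivity) (hd.le.trans (le_sinSubst hd.le hdc.le t))
  rw [sinSubst_zero hd.le, sinSubst_pi_div_two (hd.trans hdc).le] at hcov
  rw [I2, ← hcov]
  refine integral_congr_Ioo_of_le (by positivity) fun t ht => ?_
  have hs : 0 < sin t := sin_pos_of_pos_of_lt_pi ht.1 (by linarith [ht.2, pi_pos])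
  have hk : 0 < cos t := cos_pos_of_mem_Ioo ⟨by linarith [ht.1, pi_pos], ht.2⟩
  have hρ2 := sq_sinSubst hd.le hdc.le t
  have hcos : c ^ 2 - sinSubst c d t ^ 2 = (c ^ 2 - d ^ 2) * cos t ^ 2 := by
    rw [hρ2, cos_sq']; ring
  have hsqrt : √((c ^ 2 - sinSubst c d t ^ 2) * (sinSubst c d t ^ 2 - d ^ 2))
      = (c ^ 2 - d ^ 2) * sin t * cos t := by
    rw [hcos, hρ2, ← sqrt_sq (by positivity : 0 ≤ (c ^ 2 - d ^ 2) * sin t * cos t)]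
    ring_nf
  have hlog : log (c / (2 * √(c ^ 2 - sinSubst c d t ^ 2)))
      = log (c / (2 * √(c ^ 2 - d ^ 2))) - log (cos t) := by
    have : 0 < c / (2 * √(c ^ 2 - d ^ 2)) := div_pos (hd.trans hdc) (by positivity)
    rw [hcos, sqrt_mul hcd.le, sqrt_sq hk.le, ← log_div this.ne' hk.ne']
    congr 1
    field_simp
  simp only [Function.comp_apply, hsqrt, hlog]
  field_simp

lemma I2_mem_Icc {c d : ℝ} (hd : 0 < d) (hdc : d < c) (hA : 2 * √(c ^ 2 - d ^ 2) ≤ c) :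
    I2 c d ∈ Icc (π * log (c / √(c ^ 2 - d ^ 2)) / (2 * c))
      (π * log (c / √(c ^ 2 - d ^ 2)) / (2 * d)) := by
  have hc : 0 < c := hd.trans hdc
  have hs : 0 < √(c ^ 2 - d ^ 2) := sqrt_pos.2 (by nlinarith)
  set A := log (c / (2 * √(c ^ 2 - d ^ 2)))
  have hA₀ : 0 ≤ A := log_nonneg ((one_le_div (by positivity)).2 hA)
  have hnum : ∫ t in 0..(π / 2), (A - log (cos t)) = π * log (c / √(c ^ 2 - d ^ 2)) / 2 := by
    have hlog : IntervalIntegrable (fun t => log (cos t)) volume 0 (π / 2) :=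
      intervalIntegrable_log_cos
    rw [integral_sub intervalIntegrable_const hlog,
      integral_log_cos_zero_pi_div_two, intervalIntegral.integral_const, smul_eq_mul,
      show c / √(c ^ 2 - d ^ 2) = c / (2 * √(c ^ 2 - d ^ 2)) * 2 by field_simp,
      log_mul (by positivity) two_ne_zero]
    ring
  have key := integral_div_mem_Icc (h := fun t => A - log (cos t)) (ρ := sinSubst c d)
    (by positivity : (0 : ℝ) ≤ π / 2) hd (intervalIntegrable_const.sub intervalIntegrable_log_cos)
    (fun t ht => by
      have := log_nonpos (cos_nonneg_of_mem_Icc ⟨by linarith [ht.1, pi_pos], ht.2.le⟩)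
        (cos_le_one t)
      linarith)
    continuous_sinSubst.continuousOn (fun t _ => le_sinSubst hd.le hdc.le t)
    (fun t _ => sinSubst_le hd.le hdc.le t)
  rw [I2_eq_integral_sinSubst hd hdc]
  simpa only [hnum, div_div] using key

lemma I2_mul_one_sub_mem_Icc {c η : ℝ} (hc : 0 < c) (hη : 0 < η) (hη₀ : η ≤ 1 / 8) :
    I2 c (c * (1 - η)) ∈
      Icc (π / (4 * c) * -log (η * (2 - η))) (π / (4 * c) * (-log (η * (2 - η)) / (1 - η))) := by
  have hd : 0 < c * (1 - η) := mul_pos hc (by linarith)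
  have hdc : c * (1 - η) < c := by nlinarith
  have hprod : 0 ≤ η * (2 - η) := by nlinarith
  have hsqrt : √(c ^ 2 - (c * (1 - η)) ^ 2) = c * √(η * (2 - η)) := by
    rw [show c ^ 2 - (c * (1 - η)) ^ 2 = c ^ 2 * (η * (2 - η)) by ring, sqrt_mul (sq_nonneg c),
      sqrt_sq hc.le]
  have hA : 2 * √(c ^ 2 - (c * (1 - η)) ^ 2) ≤ c := by
    have : √(η * (2 - η)) ≤ 1 / 2 := sqrt_le_iff.2 ⟨by norm_num, by nlinarith⟩
    rw [hsqrt]; nlinarith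
  have hlog : log (c / √(c ^ 2 - (c * (1 - η)) ^ 2)) = -log (η * (2 - η)) / 2 := by
    rw [hsqrt, div_mul_cancel_left₀ hc.ne', log_inv, log_sqrt hprod]
    ring
  obtain ⟨hlo, hhi⟩ := I2_mem_Icc hd hdc hA
  rw [hlog] at hlo hhi
  constructor
  · convert hlo using 1; ring
  · convert hhi using 1; field_simp; ring

theorem stmt8 (c : ℝ) (hc : 0 < c) :
    ∃ C > 0, ∃ η₀ > 0, ∀ η : ℝ, 0 < η → η < η₀ →
      |I2 c (c * (1 - η)) + (Real.pi / (4*c)) * Real.log (2*η)|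
        ≤ C * η * Real.log (1/η) := by
  refine ⟨π / c, by positivity, 1 / 8, by norm_num, fun η hη hη₀ => ?_⟩
  obtain ⟨hlo, hhi⟩ := I2_mul_one_sub_mem_Icc hc hη hη₀.le
  have hK : 0 < π / (4 * c) := by positivity
  have hlog : log (η * (2 - η)) ≤ log (2 * η) := log_le_log (by nlinarith) (by nlinarith)
  have hup := mul_le_mul_of_nonneg_left
    (log_two_mul_sub_log_mul_two_sub_div_le hη hη₀.le) hK.le
  have hR : 0 ≤ π / c * η * log (1 / η) := by
    have := log_nonneg (one_le_one_div hη (by linarith))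
    positivity
  rw [abs_le]
  constructor
  · linarith [mul_le_mul_of_nonneg_left hlog hK.le]
  · calc I2 c (c * (1 - η)) + π / (4 * c) * log (2 * η)
        ≤ π / (4 * c) * (log (2 * η) - log (η * (2 - η)) / (1 - η)) := by
          rw [neg_div] at hhi; linarith
      _ ≤ π / (4 * c) * (4 * η * log (1 / η)) := hup
      _ = π / c * η * log (1 / η) := by field_simp
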